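/- For all integers m, n ≥ 0 with p = 2m+n ≥ 2 and every integer k ≥ 3, there exists an (m,n)-colored mixed graph H whose underlying simple graph has acyclic chromatic number at most k and such that χ_{(m,n)}(H) ≥ k·p^{k-1}. -/

import Mathlib

/-!
Take `k` classes and let `p = 2m + n` be the number of link types. A pattern of class `i`
prescribes a link type towards each of the other `k - 1` classes, so there are `k p^(k-1)`
patterns. For every class `i` and every class `j ≠ i` a hub of color `j` is joined to each
pattern of class `i` by the link that the pattern prescribes for `j`; for every ordered pair of
patterns of distinct classes a connector, colored with a third class, is joined to them by two
different links. A homomorphism cannot identify two patterns, since a hub or a connector sees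
them through different links. The coloring is acyclic: ranking hubs below patterns below
connectors, the lower neighbors of every vertex get distinct colors, so in the subgraph spanned
by two color classes every vertex has at most one lower neighbor, and the top vertex of a cycle
would have two.
-/

/-- The possible kinds of links from a vertex `u` to a vertex `v` in an
`(m,n)`-colored mixed graph: an arc `u → v` of one of `m` colors, an arc
`v → u` of one of `m` colors, or an (unoriented) edge of one of `n` colors. -/
inductive Link (m n : ℕ) : Type where
  | arcOut : Fin m → Link m n
  | arcIn : Fin m → Link m n
  | edge : Fin n → Link m n

/-- The link as seen from the other endpoint. -/
def Link.flip {m n : ℕ} : Link m n → Link m n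
  | .arcOut c => .arcIn c
  | .arcIn c => .arcOut c
  | .edge c => .edge c

/-- An `(m,n)`-colored mixed graph on vertex type `V`: between any two distinct
vertices there is at most one link (a colored arc in either direction or a
colored edge), and there are no loops. -/
structure CMGraph (m n : ℕ) (V : Type) where
  link : V → V → Option (Link m n)
  symm : ∀ u v, link v u = (link u v).map Link.flip
  loopless : ∀ v, link v v = none

/-- The underlying simple graph of an `(m,n)`-colored mixed graph. -/
def CMGraph.underlying {m n : ℕ} {V : Type} (G : CMGraph m n V) : SimpleGraph V where
  Adj u v := (G.link u v).isSome
  symm := by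
    constructor
    intro u v h
    try beta_reduce at h ⊢
    rw [G.symm u v]
    rcases hx : G.link u v with _ | l
    · rw [hx] at h; simp at h
    · simp
  loopless := by
    constructor
    intro v h
    try beta_reduce at h ⊢
    rw [G.loopless v] at h
    simp at h

/-- A homomorphism of `(m,n)`-colored mixed graphs: arcs map to arcs of the same
color and direction, edges map to edges of the same color. -/
def IsCMHom {m n : ℕ} {V W : Type} (G : CMGraph m n V) (H : CMGraph m n W)
    (f : V → W) : Prop :=
  ∀ u v l, G.link u v = some l → H.link (f u) (f v) = some l

/-- `G` admits a homomorphism to some `(m,n)`-colored mixed graph on at most `k`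
vertices, i.e. `χ_{(m,n)}(G) ≤ k`. -/
def CMChromAtMost {m n : ℕ} {V : Type} (G : CMGraph m n V) (k : ℕ) : Prop :=
  ∃ (W : Type) (inst : Fintype W) (H : CMGraph m n W) (f : V → W),
    @Fintype.card W inst ≤ k ∧ IsCMHom G H f

/-- Every `(m,n)`-colored mixed graph admitting a homomorphism from `G` has at
least `k` vertices, i.e. `χ_{(m,n)}(G) ≥ k`. -/
def CMChromAtLeast {m n : ℕ} {V : Type} (G : CMGraph m n V) (k : ℕ) : Prop :=
  ∀ (W : Type) (inst : Fintype W) (H : CMGraph m n W) (f : V → W),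
    IsCMHom G H f → k ≤ @Fintype.card W inst

/-- The acyclic chromatic number of `G` is at most `k`: there is a proper
`k`-coloring in which the union of any two color classes induces a forest. -/
def AcycChromAtMost {V : Type} (G : SimpleGraph V) (k : ℕ) : Prop :=
  ∃ c : V → Fin k, (∀ u v, G.Adj u v → c u ≠ c v) ∧
    ∀ i j : Fin k, (G.induce {v | c v = i ∨ c v = j}).IsAcyclic

/-- The edge set of `G` can be decomposed into `r` forests. -/
def ArbAtMost {V : Type} (G : SimpleGraph V) (r : ℕ) : Prop :=
  ∃ F : Fin r → SimpleGraph V,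
    (∀ i, F i ≤ G) ∧
    (∀ i, (F i).IsAcyclic) ∧
    (∀ u v, G.Adj u v → ∃ i, (F i).Adj u v) ∧
    (∀ i j, i ≠ j → ∀ u v, ¬ ((F i).Adj u v ∧ (F j).Adj u v))

/-- Every vertex of `G` has degree at most `d`. -/
def MaxDegAtMost {V : Type} (G : SimpleGraph V) (d : ℕ) : Prop :=
  ∀ v, (G.neighborSet v).ncard ≤ d

/-- `G` is `d`-degenerate: every nonempty (induced) subgraph has a vertex of
degree at most `d` in it. -/
def DegenAtMost {V : Type} (G : SimpleGraph V) (d : ℕ) : Prop :=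
  ∀ s : Set V, s.Nonempty → ∃ v ∈ s, (G.neighborSet v ∩ s).ncard ≤ d

theorem Fintype.exists_ne_and_ne {α : Type*} [Fintype α] (h : 2 < Fintype.card α) (a b : α) :
    ∃ c, c ≠ a ∧ c ≠ b := by
  classical
  obtain ⟨c, -, hc⟩ := Finset.exists_mem_notMem_of_card_lt_card
    (s := {a, b}) (t := Finset.univ) (Finset.card_le_two.trans_lt h)
  exact ⟨c, by simpa [not_or] using hc⟩

namespace SimpleGraph

theorem isAcyclic_of_lower_neighbor_unique {V α : Type*} [LinearOrder α]
    {G : SimpleGraph V} (r : V → α) (hr : ∀ u v, G.Adj u v → r u ≠ r v)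
    (hlower : ∀ v u₁ u₂, G.Adj v u₁ → G.Adj v u₂ → r u₁ < r v → r u₂ < r v → u₁ = u₂) :
    G.IsAcyclic := by
  intro x c hc
  obtain ⟨v, hv, hmax⟩ := Set.exists_max_image {w | w ∈ c.support} r
    c.support.finite_toSet ⟨x, c.start_mem_support⟩
  obtain ⟨w₁, w₂, hne, hnbr⟩ :=
    Set.ncard_eq_two.mp (hc.ncard_neighborSet_toSubgraph_eq_two hv)
  have lower : ∀ w ∈ c.toSubgraph.neighborSet v, G.Adj v w ∧ r w < r v := fun w hw =>
    ⟨c.toSubgraph.adj_sub hw, (hmax w (Walk.mem_support_of_adj_toSubgraph hw.symm)).lt_of_ne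
      (hr v w (c.toSubgraph.adj_sub hw)).symm⟩
  obtain ⟨h₁, hr₁⟩ := lower w₁ (by simp [hnbr])
  obtain ⟨h₂, hr₂⟩ := lower w₂ (by simp [hnbr])
  exact hne (hlower v w₁ w₂ h₁ h₂ hr₁ hr₂)

end SimpleGraph

theorem acycChromAtMost_of_rank {V : Type} {α : Type*} [LinearOrder α] {G : SimpleGraph V}
    {k : ℕ} (c : V → Fin k) (r : V → α) (hc : ∀ u v, G.Adj u v → c u ≠ c v)
    (hr : ∀ u v, G.Adj u v → r u ≠ r v)
    (hlower : ∀ v u₁ u₂, G.Adj v u₁ → G.Adj v u₂ → r u₁ < r v → r u₂ < r v →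
      c u₁ = c u₂ → u₁ = u₂) :
    AcycChromAtMost G k := by
  refine ⟨c, hc, fun i j => ?_⟩
  refine SimpleGraph.isAcyclic_of_lower_neighbor_unique (r ∘ Subtype.val)
    (fun u v h => hr u v h) fun ⟨v, hv⟩ ⟨u₁, hu₁⟩ ⟨u₂, hu₂⟩ h₁ h₂ hr₁ hr₂ => Subtype.ext ?_
  have hc₁ := hc v u₁ h₁
  have hc₂ := hc v u₂ h₂
  simp only [Set.mem_ofPred_eq] at hv hu₁ hu₂
  exact hlower v u₁ u₂ h₁ h₂ hr₁ hr₂ (by grind)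

namespace Link

def equivSum (m n : ℕ) : Link m n ≃ Fin m ⊕ Fin m ⊕ Fin n where
  toFun
    | .arcOut c => .inl c
    | .arcIn c => .inr (.inl c)
    | .edge c => .inr (.inr c)
  invFun
    | .inl c => .arcOut c
    | .inr (.inl c) => .arcIn c
    | .inr (.inr c) => .edge c
  left_inv := by rintro (c | c | c) <;> rfl
  right_inv := by rintro (c | c | c) <;> rfl

instance (m n : ℕ) : Fintype (Link m n) := Fintype.ofEquiv _ (equivSum m n).symm

instance (m n : ℕ) : DecidableEq (Link m n) := (equivSum m n).decidableEq

theorem card_eq (m n : ℕ) : Fintype.card (Link m n) = 2 * m + n := by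
  simp [Fintype.card_congr (equivSum m n), two_mul, add_assoc]

@[simp]
theorem flip_flip {m n : ℕ} (l : Link m n) : l.flip.flip = l := by
  cases l <;> rfl

end Link

namespace CMGraph

variable {m n : ℕ}

def bipartite {P Q : Type} (L : P → Q → Option (Link m n)) : CMGraph m n (P ⊕ Q) where
  link
    | .inl p, .inr q => L p q
    | .inr q, .inl p => (L p q).map Link.flip
    | _, _ => none
  symm := by rintro (p | q) (p' | q') <;> simp [Option.map_map, Function.comp_def]
  loopless := by rintro (p | q) <;> rfl

section bipartite

variable {P Q : Type} {L : P → Q → Option (Link m n)}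

@[simp] theorem bipartite_link_inl_inr (p : P) (q : Q) :
    (bipartite L).link (.inl p) (.inr q) = L p q := rfl

@[simp] theorem bipartite_adj_inl_inl (p p' : P) :
    ¬(bipartite L).underlying.Adj (.inl p) (.inl p') :=
  Bool.false_ne_true

@[simp] theorem bipartite_adj_inr_inr (q q' : Q) :
    ¬(bipartite L).underlying.Adj (.inr q) (.inr q') :=
  Bool.false_ne_true

@[simp] theorem bipartite_adj_inl_inr (p : P) (q : Q) :
    (bipartite L).underlying.Adj (.inl p) (.inr q) ↔ (L p q).isSome := Iff.rfl

@[simp] theorem bipartite_adj_inr_inl (p : P) (q : Q) :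
    (bipartite L).underlying.Adj (.inr q) (.inl p) ↔ (L p q).isSome := by
  simp [underlying, bipartite]

end bipartite

end CMGraph

theorem IsCMHom.apply_ne_of_link_ne {m n : ℕ} {V W : Type} {G : CMGraph m n V}
    {H : CMGraph m n W} {f : V → W} (hf : IsCMHom G H f) {u v w : V} {l l' : Link m n}
    (hu : G.link u w = some l) (hv : G.link v w = some l') (hl : l ≠ l') : f u ≠ f v := by
  intro h
  have := hf v w l' hv
  rw [← h, hf u w l hu] at this
  exact hl (Option.some.inj this)

theorem cmChromAtLeast_of_pairwise_link_ne {m n : ℕ} {V ι : Type} [Fintype ι]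
    {G : CMGraph m n V} (e : ι → V)
    (he : Pairwise fun a b =>
      ∃ w l l', l ≠ l' ∧ G.link (e a) w = some l ∧ G.link (e b) w = some l') :
    CMChromAtLeast G (Fintype.card ι) := by
  intro W _ H f hf
  refine Fintype.card_le_of_injective (f ∘ e) fun a b hab => ?_
  by_contra hne
  obtain ⟨w, l, l', hl, ha, hb⟩ := he hne
  exact hf.apply_ne_of_link_ne ha hb hl hab

namespace PatternGraph

variable (m n K : ℕ)

/-- A pattern of class `i` prescribes a link type towards each class `i.succAbove r ≠ i`. -/
abbrev Pattern : Type := Fin (K + 1) × (Fin K → Link m n)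

/-- The hub `(i, r)` is attached to the patterns of class `i` and has class `i.succAbove r`. -/
abbrev Hub : Type := Fin (K + 1) × Fin K

abbrev Connector : Type := {q : Pattern m n K × Pattern m n K // q.1.1 ≠ q.2.1}

variable {m n K}

def link (l₀ l₁ : Link m n) : Pattern m n K → Hub K ⊕ Connector m n K → Option (Link m n)
  | p, .inl h => if p.1 = h.1 then some (p.2 h.2) else none
  | p, .inr c => if p = c.1.1 then some l₀ else if p = c.1.2 then some l₁ else none

variable (K) in
def graph (l₀ l₁ : Link m n) : CMGraph m n (Pattern m n K ⊕ (Hub K ⊕ Connector m n K)) :=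
  CMGraph.bipartite (link l₀ l₁)

variable {l₀ l₁ : Link m n}

@[simp] theorem link_hub_isSome (p : Pattern m n K) (h : Hub K) :
    (link l₀ l₁ p (.inl h)).isSome ↔ p.1 = h.1 := by
  by_cases hp : p.1 = h.1 <;> simp [link, hp]

@[simp] theorem link_connector_isSome (p : Pattern m n K) (c : Connector m n K) :
    (link l₀ l₁ p (.inr c)).isSome ↔ p = c.1.1 ∨ p = c.1.2 := by
  simp only [link]
  split_ifs <;> simp_all

def color (third : Fin (K + 1) → Fin (K + 1) → Fin (K + 1)) :
    Pattern m n K ⊕ (Hub K ⊕ Connector m n K) → Fin (K + 1)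
  | .inl p => p.1
  | .inr (.inl h) => h.1.succAbove h.2
  | .inr (.inr c) => third c.1.1.1 c.1.2.1

def rank : Pattern m n K ⊕ (Hub K ⊕ Connector m n K) → ℕ
  | .inl _ => 1
  | .inr (.inl _) => 0
  | .inr (.inr _) => 2

theorem acycChromAtMost_graph (third : Fin (K + 1) → Fin (K + 1) → Fin (K + 1))
    (hthird : ∀ i j, third i j ≠ i ∧ third i j ≠ j) :
    AcycChromAtMost (graph K l₀ l₁).underlying (K + 1) := by
  refine acycChromAtMost_of_rank (color third) rank ?_ ?_ ?_
  · rintro (p | h | c) (p' | h' | c') hadj <;> simp [graph, color] at hadj ⊢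
    · rw [hadj]; exact Fin.ne_succAbove _ _
    · rcases hadj with rfl | rfl
      exacts [(hthird _ _).1.symm, (hthird _ _).2.symm]
    · rw [← hadj]; exact Fin.succAbove_ne _ _
    · rcases hadj with rfl | rfl
      exacts [(hthird _ _).1, (hthird _ _).2]
  · rintro (p | h | c) (p' | h' | c') hadj <;> simp [graph, rank] at hadj ⊢
  · rintro (p | h | c) (p₁ | h₁ | c₁) (p₂ | h₂ | c₂) hadj₁ hadj₂ hr₁ hr₂ hc <;>
      simp [graph, rank, color] at hadj₁ hadj₂ hr₁ hr₂ hc ⊢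
    · obtain ⟨i₁, r₁⟩ := h₁
      obtain ⟨i₂, r₂⟩ := h₂
      obtain rfl : i₁ = i₂ := hadj₁.symm.trans hadj₂
      exact congrArg _ (Fin.succAbove_right_injective hc)
    · have := c.2
      rcases hadj₁ with rfl | rfl <;> rcases hadj₂ with rfl | rfl <;> simp_all

theorem cmChromAtLeast_graph (hl : l₀ ≠ l₁) :
    CMChromAtLeast (graph K l₀ l₁) ((K + 1) * (2 * m + n) ^ K) := by
  have hcard : Fintype.card (Pattern m n K) = (K + 1) * (2 * m + n) ^ K := by
    simp [Link.card_eq]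
  rw [← hcard]
  refine cmChromAtLeast_of_pairwise_link_ne Sum.inl fun p q hpq => ?_
  by_cases hcl : p.1 = q.1
  · obtain ⟨r, hr⟩ : ∃ r, p.2 r ≠ q.2 r := by
      by_contra! h
      exact hpq (Prod.ext hcl (funext h))
    exact ⟨.inr (.inl (p.1, r)), p.2 r, q.2 r, hr, by simp [graph, link],
      by simp [graph, link, hcl]⟩
  · exact ⟨.inr (.inr ⟨(p, q), hcl⟩), l₀, l₁, hl, by simp [graph, link],
      by simp [graph, link, Ne.symm hpq]⟩

end PatternGraph

/-- For `p = 2m+n ≥ 2` and `k ≥ 3` there is an `(m,n)`-colored mixed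
graph whose underlying simple graph has acyclic chromatic number at most `k` and whose
`(m,n)`-colored mixed chromatic number is at least `k·p^(k-1)`. -/
theorem exists_acyclic_k_with_large_mixed_chromatic (m n k : ℕ)
    (hp : 2 ≤ 2 * m + n) (hk : 3 ≤ k) :
    ∃ (V : Type) (_ : Fintype V) (M : CMGraph m n V),
      AcycChromAtMost M.underlying k ∧ CMChromAtLeast M (k * (2 * m + n) ^ (k - 1)) := by
  obtain ⟨K, rfl⟩ : ∃ K, k = K + 1 := ⟨k - 1, by omega⟩
  obtain ⟨l₀, l₁, hl⟩ : ∃ l₀ l₁ : Link m n, l₀ ≠ l₁ :=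
    Fintype.one_lt_card_iff.mp (by rw [Link.card_eq]; omega)
  choose third hthird using Fintype.exists_ne_and_ne (α := Fin (K + 1)) (by simpa using hk)
  exact ⟨_, inferInstance, PatternGraph.graph K l₀ l₁,
    PatternGraph.acycChromAtMost_graph third hthird, PatternGraph.cmChromAtLeast_graph hl⟩
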